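/- The linear map f : A_z^{−2} ⊗ (A_z^0 ∩ Z⟨e_1,e_z⟩) → A_z^0 given by f(u ⊗ v) = u ⧢ v is a bijection. -/

import Mathlib

open scoped BigOperators

/-- Letters: `0 ↦ e₀`, `1 ↦ e₁`, `2 ↦ e_z`. -/
abbrev Letter := Fin 3

/-- The free noncommutative ring `𝒜_z = ℤ⟨e₀, e₁, e_z⟩`. -/
abbrev Az := MonoidAlgebra ℤ (FreeMonoid Letter)

/-- The monomial (word) corresponding to a list of letters. -/
noncomputable def wordOf (l : List Letter) : Az :=
  MonoidAlgebra.single (FreeMonoid.ofList l) 1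

/-- The extended sequence `a₀ = 0, a₁, …, a_n, a_{n+1} = 1`. -/
def ext (a : List Letter) (j : ℕ) : Letter :=
  ((0 : Letter) :: a ++ [1]).getD j 1

/-- `∂_{α,β}` on a word. -/
noncomputable def Dword (α β : Letter) (a : List Letter) : Az :=
  ∑ i ∈ Finset.range a.length,
    (((if ({ext a (i + 1), ext a (i + 2)} : Finset Letter) = {α, β} then 1 else 0)
      - (if ({ext a i, ext a (i + 1)} : Finset Letter) = {α, β} then 1 else 0) : ℤ))
      • wordOf (a.eraseIdx i)

/-- The linear operator `∂_{α,β} : 𝒜_z → 𝒜_z`. -/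
noncomputable def del (α β : Letter) : Az →ₗ[ℤ] Az :=
  (Finsupp.lsum ℤ fun w => LinearMap.toSpanSingleton ℤ Az (Dword α β (FreeMonoid.toList w))) ∘ₗ (MonoidAlgebra.coeffLinearEquiv ℤ).toLinearMap

/-- The shuffle product of two words. -/
noncomputable def shuffleWord : List Letter → List Letter → Az
  | [], v => wordOf v
  | u, [] => wordOf u
  | a :: u, b :: v =>
      wordOf [a] * shuffleWord u (b :: v) + wordOf [b] * shuffleWord (a :: u) v
termination_by u v => u.length + v.length

/-- The shuffle product as a bilinear map on `𝒜_z`. -/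
noncomputable def sh : Az →ₗ[ℤ] Az →ₗ[ℤ] Az :=
  (Finsupp.lsum ℤ fun u => LinearMap.toSpanSingleton ℤ (Az →ₗ[ℤ] Az)
    ((Finsupp.lsum ℤ fun v =>
      LinearMap.toSpanSingleton ℤ Az (shuffleWord (FreeMonoid.toList u) (FreeMonoid.toList v))) ∘ₗ (MonoidAlgebra.coeffLinearEquiv ℤ).toLinearMap)) ∘ₗ (MonoidAlgebra.coeffLinearEquiv ℤ).toLinearMap

/-- The (generalized) stuffle product of two words (the left word should lie in `𝒜`). -/
noncomputable def stWord : List Letter → List Letter → Az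
  | [], v => wordOf v
  | u, [] => wordOf u
  | a :: u, b :: v =>
      if a = 0 then wordOf [0] * stWord u (b :: v)
      else if a = 1 then
        wordOf [b] * (stWord u (b :: v) + stWord (a :: u) v - wordOf [0] * stWord u v)
      else 0
termination_by u v => u.length + v.length

/-- The stuffle product as a bilinear map. -/
noncomputable def st : Az →ₗ[ℤ] Az →ₗ[ℤ] Az :=
  (Finsupp.lsum ℤ fun u => LinearMap.toSpanSingleton ℤ (Az →ₗ[ℤ] Az)
    ((Finsupp.lsum ℤ fun v =>
      LinearMap.toSpanSingleton ℤ Az (stWord (FreeMonoid.toList u) (FreeMonoid.toList v))) ∘ₗ (MonoidAlgebra.coeffLinearEquiv ℤ).toLinearMap)) ∘ₗ (MonoidAlgebra.coeffLinearEquiv ℤ).toLinearMap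

/-- `Const` kills every word containing the letter `e_z`. -/
noncomputable def Const : Az →ₗ[ℤ] Az :=
  (Finsupp.lsum ℤ fun w => LinearMap.toSpanSingleton ℤ Az
    (if (2 : Letter) ∈ FreeMonoid.toList w then 0 else wordOf (FreeMonoid.toList w))) ∘ₗ (MonoidAlgebra.coeffLinearEquiv ℤ).toLinearMap

/-- `τ_z` on letters. -/
noncomputable def tauLetter (a : Letter) : Az :=
  if a = 0 then wordOf [2] - wordOf [1]
  else if a = 1 then wordOf [2] - wordOf [0]
  else wordOf [2]

/-- `τ_z` on a word (reversing the word). -/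
noncomputable def tauWord : List Letter → Az
  | [] => 1
  | a :: u => tauWord u * tauLetter a

/-- The duality anti-automorphism `τ_z`. -/
noncomputable def tau : Az →ₗ[ℤ] Az :=
  (Finsupp.lsum ℤ fun w => LinearMap.toSpanSingleton ℤ Az (tauWord (FreeMonoid.toList w))) ∘ₗ (MonoidAlgebra.coeffLinearEquiv ℤ).toLinearMap

/-- `𝒜_z^0`: span of the empty word and of words beginning with `e₁` or `e_z`
and ending in `e₀` or `e_z`. -/
noncomputable def Az0 : Submodule ℤ Az :=
  Submodule.span ℤ {x | ∃ l : List Letter,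
    (l = [] ∨ (l.head? ≠ some 0 ∧ l.getLast? ≠ some 1)) ∧ x = wordOf l}

/-- `𝒜_z^1`: span of the empty word and of words beginning with `e₁` or `e_z`. -/
noncomputable def Az1 : Submodule ℤ Az :=
  Submodule.span ℤ {x | ∃ l : List Letter, l.head? ≠ some 0 ∧ x = wordOf l}

/-- `𝒜 = ℤ⟨e₀, e₁⟩` inside `𝒜_z`. -/
noncomputable def Asub : Submodule ℤ Az :=
  Submodule.span ℤ {x | ∃ l : List Letter, (2 : Letter) ∉ l ∧ x = wordOf l}

/-- `𝒜^1 = ℤ ⊕ e₁𝒜`. -/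
noncomputable def A1sub : Submodule ℤ Az :=
  Submodule.span ℤ {x | ∃ l : List Letter,
    ((2 : Letter) ∉ l ∧ l.head? ≠ some 0 ∧ l.head? ≠ some 2) ∧ x = wordOf l}

/-- `𝒜^0 = ℤ ⊕ e₁𝒜e₀`. -/
noncomputable def A0sub : Submodule ℤ Az :=
  Submodule.span ℤ {x | ∃ l : List Letter,
    ((2 : Letter) ∉ l ∧ (l = [] ∨ (l.head? = some 1 ∧ l.getLast? = some 0))) ∧ x = wordOf l}

/-- `𝒜_z^{-2} = ℤ ⊕ e₁𝒜_z e₀ ⊕ e_z 𝒜_z e₀`. -/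
noncomputable def Azm2 : Submodule ℤ Az :=
  Submodule.span ℤ {x | ∃ l : List Letter,
    (l = [] ∨ (l.head? ≠ some 0 ∧ l.getLast? = some 0)) ∧ x = wordOf l}

/-- `𝒜_z^0 ∩ ℤ⟨e₁, e_z⟩`. -/
noncomputable def Wsub : Submodule ℤ Az :=
  Submodule.span ℤ {x | ∃ l : List Letter,
    ((0 : Letter) ∉ l ∧ (l = [] ∨ l.getLast? = some 2)) ∧ x = wordOf l}

/-- `ℤ⟨e_z⟩`: span of powers of `e_z`. -/
noncomputable def Zez : Submodule ℤ Az :=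
  Submodule.span ℤ {x | ∃ k : ℕ, x = wordOf (List.replicate k 2)}

/-- `𝒜_z^{-1} = 𝒜_z^{-2}·ℤ⟨e_z⟩`. -/
noncomputable def Azm1 : Submodule ℤ Az :=
  Submodule.span ℤ {x | ∃ l : List Letter, ∃ k : ℕ,
    (l = [] ∨ (l.head? ≠ some 0 ∧ l.getLast? = some 0)) ∧ x = wordOf (l ++ List.replicate k 2)}

/-- `ℤ⟨e₀, e_z⟩ ∩ 𝒜_z^0`. -/
noncomputable def Vsub : Submodule ℤ Az :=
  Submodule.span ℤ {x | ∃ l : List Letter,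
    ((1 : Letter) ∉ l ∧ (l = [] ∨ l.head? = some 2)) ∧ x = wordOf l}

/-- All lists of length `r` with entries in `{e₀, e_z}`. -/
def tuples : ℕ → List (List Letter)
  | 0 => [[]]
  | n + 1 => (tuples n).flatMap fun t => [(0 : Letter) :: t, (2 : Letter) :: t]

/-- `∂_{1,b₁} ∘ ⋯ ∘ ∂_{1,b_r}` for `bs = [b₁, …, b_r]`. -/
noncomputable def delChain : List Letter → Az →ₗ[ℤ] Az
  | [] => LinearMap.id
  | b :: bs => (del 1 b).comp (delChain bs)

/-- `∂_{z,α₁} ∘ ⋯ ∘ ∂_{z,α_r}` for `as = [α₁, …, α_r]`. -/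
noncomputable def delZChain : List Letter → Az →ₗ[ℤ] Az
  | [] => LinearMap.id
  | a :: as => (del 2 a).comp (delZChain as)

/-- `φ_⧢` on a word. -/
noncomputable def phiShWord (l : List Letter) : Az :=
  ∑ r ∈ Finset.range (l.length + 1),
    ((tuples r).map fun b => sh (Const (delChain b (wordOf l))) (wordOf b)).sum

/-- `φ_⧢ : 𝒜_z^0 → 𝒜_z^0` (defined on all of `𝒜_z`). -/
noncomputable def phiSh : Az →ₗ[ℤ] Az :=
  (Finsupp.lsum ℤ fun w => LinearMap.toSpanSingleton ℤ Az (phiShWord (FreeMonoid.toList w))) ∘ₗ (MonoidAlgebra.coeffLinearEquiv ℤ).toLinearMap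

/-- `φ_*` on a word. -/
noncomputable def phiStWord (l : List Letter) : Az :=
  ∑ r ∈ Finset.range (l.length + 1),
    ((tuples r).map fun b => st (Const (delChain b (wordOf l))) (wordOf b)).sum

/-- `φ_* : 𝒜_z^0 → 𝒜_z^0` (defined on all of `𝒜_z`). -/
noncomputable def phiSt : Az →ₗ[ℤ] Az :=
  (Finsupp.lsum ℤ fun w => LinearMap.toSpanSingleton ℤ Az (phiStWord (FreeMonoid.toList w))) ∘ₗ (MonoidAlgebra.coeffLinearEquiv ℤ).toLinearMap

/-- `φ_⊗` on a word. -/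
noncomputable def phiTWord (l : List Letter) : TensorProduct ℤ Az Az :=
  ∑ r ∈ Finset.range (l.length + 1),
    ((tuples r).map fun b => (Const (delChain b (wordOf l))) ⊗ₜ[ℤ] (wordOf b)).sum

/-- `φ_⊗ : 𝒜_z^0 → 𝒜^0 ⊗ ℤ⟨e₀, e_z⟩` (defined on all of `𝒜_z`). -/
noncomputable def phiT : Az →ₗ[ℤ] TensorProduct ℤ Az Az :=
  (Finsupp.lsum ℤ fun w => LinearMap.toSpanSingleton ℤ (TensorProduct ℤ Az Az)
    (phiTWord (FreeMonoid.toList w))) ∘ₗ (MonoidAlgebra.coeffLinearEquiv ℤ).toLinearMap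

/-- The `i`-fold shuffle power of `e₁`. -/
noncomputable def e1pow : ℕ → Az
  | 0 => 1
  | n + 1 => sh (wordOf [1]) (e1pow n)

/-- Substitution `z → 1` on words. -/
noncomputable def subst1 : Az →ₗ[ℤ] Az :=
  (Finsupp.lsum ℤ fun w => LinearMap.toSpanSingleton ℤ Az
    (wordOf ((FreeMonoid.toList w).map fun a => if a = 2 then 1 else a))) ∘ₗ (MonoidAlgebra.coeffLinearEquiv ℤ).toLinearMap

/-!
Every word of `𝒜_z^0` splits uniquely as `u v` with `v` its longest suffix free of `e₀`; then
`u ∈ 𝒜_z^{-2}` (empty or ending in `e₀`) and `v ∈ 𝒜_z^0 ∩ ℤ⟨e₁, e_z⟩`. In the shuffle `u ⧢ v` the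
word `u v` occurs exactly once, and every other shuffle places some letter of `v` before the final
`e₀` of `u`, so it has a shorter `e₀`-free suffix. Hence the images `u ⧢ v` of the basis `u ⊗ v`
are unitriangular with respect to the basis of words of `𝒜_z^0`, ordered by the length of that
suffix, and so form a basis of `𝒜_z^0`.
-/

open Submodule Set

section UnitriangularFamily

variable {ι κ R M : Type*} [Ring R] [AddCommGroup M] [Module R M] {b f : ι → M} {deg : ι → κ}

theorem span_range_eq_of_sub_mem_span_lt [Preorder κ] [WellFoundedLT κ]
    (hf : ∀ i, f i - b i ∈ span R (b '' {j | deg j < deg i})) :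
    span R (range f) = span R (range b) := by
  apply le_antisymm
  · rw [span_le]
    rintro _ ⟨i, rfl⟩
    have hlow : span R (b '' {j | deg j < deg i}) ≤ span R (range b) :=
      span_mono (image_subset_range _ _)
    simpa using add_mem (subset_span ⟨i, rfl⟩ : b i ∈ span R (range b)) (hlow (hf i))
  · rw [span_le]
    rintro _ ⟨i, rfl⟩
    induction i using (InvImage.wf deg wellFounded_lt).induction with
    | _ i ih =>
      have hlow : span R (b '' {j | deg j < deg i}) ≤ span R (range f) := by
        rw [span_le]
        rintro _ ⟨j, hj, rfl⟩
        exact ih j hj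
      simpa using sub_mem (subset_span ⟨i, rfl⟩ : f i ∈ span R (range f)) (hlow (hf i))

theorem linearIndependent_of_sub_mem_span_lt [LinearOrder κ] (hb : LinearIndependent R b)
    (hf : ∀ i, f i - b i ∈ span R (b '' {j | deg j < deg i})) :
    LinearIndependent R f := by
  classical
  choose c hc_supp hc using fun i => (Finsupp.mem_span_image_iff_linearCombination R).1 (hf i)
  set e : ι → ι →₀ R := fun j => Finsupp.single j 1 + c j
  have he : ∀ j, Finsupp.linearCombination R b (e j) = f j := by simp [e, hc]
  rw [linearIndependent_iff']
  intro s g hg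
  by_contra! hne
  obtain ⟨i, hi, hmax⟩ := (s.filter (g · ≠ 0)).exists_max_image deg
    (by simpa [Finset.filter_nonempty_iff] using hne)
  rw [Finset.mem_filter] at hi
  have hzero : ∑ j ∈ s, g j • e j = 0 :=
    hb.finsuppLinearCombination_injective (by simpa [map_sum, he] using hg)
  have hci : ∀ j, deg j ≤ deg i → c j i = 0 := fun j hj =>
    Finsupp.notMem_support_iff.1 fun h => hj.not_gt (hc_supp j h)
  -- `b i` with `deg i` maximal on the support occurs only in `f i`
  have hother : ∀ j ∈ s, j ≠ i → g j * e j i = 0 := by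
    intro j hj hji
    by_cases hgj : g j = 0
    · simp [hgj]
    · simp [e, hci j (hmax j (Finset.mem_filter.2 ⟨hj, hgj⟩)), hji]
  have := congrArg (· i) hzero
  simp only [Finsupp.coe_finsetSum, Finset.sum_apply, Finsupp.coe_zero, Pi.zero_apply,
    Finsupp.smul_apply, smul_eq_mul] at this
  rw [Finset.sum_eq_single_of_mem i hi.1 hother] at this
  exact hi.2 (by simpa [e, hci i le_rfl] using this)

end UnitriangularFamily

namespace List

variable {α : Type*}

theorem rtakeWhile_append_of_forall (p : α → Bool) {l₁ l₂ : List α}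
    (h₁ : ∀ x ∈ l₁.getLast?, ¬p x) (h₂ : ∀ x ∈ l₂, p x) : (l₁ ++ l₂).rtakeWhile p = l₂ := by
  induction l₂ using reverseRecOn with
  | nil =>
    rw [append_nil, rtakeWhile_eq_nil_iff]
    exact fun hl => h₁ _ (by simp [getLast?_eq_some_getLast hl])
  | append_singleton l x ih =>
    rw [← append_assoc, rtakeWhile_concat_pos _ _ _ (h₂ x (by simp)),
      ih fun y hy => h₂ y (by simp [hy])]

theorem rdropWhile_append_of_forall (p : α → Bool) {l₁ l₂ : List α}
    (h₁ : ∀ x ∈ l₁.getLast?, ¬p x) (h₂ : ∀ x ∈ l₂, p x) : (l₁ ++ l₂).rdropWhile p = l₁ := by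
  have h := rdropWhile_append_rtakeWhile (p := p) (l := l₁ ++ l₂)
  rw [rtakeWhile_append_of_forall p h₁ h₂] at h
  exact append_cancel_right h

theorem rtakeWhile_cons_of_exists (p : α → Bool) (a : α) {l : List α} (h : ∃ x ∈ l, ¬p x) :
    (a :: l).rtakeWhile p = l.rtakeWhile p := by
  induction l using reverseRecOn with
  | nil => simp at h
  | append_singleton l x ih =>
    rw [← cons_append, rtakeWhile_concat, rtakeWhile_concat]
    split_ifs with hx
    · rw [ih (by simpa [hx] using h)]
    · rfl

def shuffles : List α → List α → List (List α)
  | [], v => [v]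
  | u, [] => [u]
  | a :: u, b :: v => (shuffles u (b :: v)).map (a :: ·) ++ (shuffles (a :: u) v).map (b :: ·)
termination_by u v => u.length + v.length

@[simp] theorem shuffles_nil_left (v : List α) : shuffles [] v = [v] := by
  cases v <;> simp [shuffles]

@[simp] theorem shuffles_nil_right (u : List α) : shuffles u [] = [u] := by
  cases u <;> simp [shuffles]

theorem shuffles_cons_cons (a b : α) (u v : List α) :
    shuffles (a :: u) (b :: v) =
      (shuffles u (b :: v)).map (a :: ·) ++ (shuffles (a :: u) v).map (b :: ·) := by
  rw [shuffles]

theorem perm_append_of_mem_shuffles {u v w : List α} (h : w ∈ shuffles u v) : w ~ u ++ v := by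
  induction u, v using shuffles.induct generalizing w with
  | case1 v => simp_all
  | case2 u => simp_all
  | case3 a u b v ih₁ ih₂ =>
    simp only [shuffles_cons_cons, mem_append, mem_map] at h
    rcases h with ⟨w, hw, rfl⟩ | ⟨w, hw, rfl⟩
    · exact (ih₁ hw).cons a
    · exact ((ih₂ hw).cons b).trans perm_middle.symm

theorem head?_eq_or_eq_of_mem_shuffles {u v w : List α} (h : w ∈ shuffles u v) :
    w.head? = u.head? ∨ w.head? = v.head? := by
  induction u, v using shuffles.induct generalizing w with
  | case1 v => simp_all
  | case2 u => simp_all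
  | case3 a u b v ih₁ ih₂ =>
    simp only [shuffles_cons_cons, mem_append, mem_map] at h
    rcases h with ⟨w, hw, rfl⟩ | ⟨w, hw, rfl⟩ <;> simp

theorem getLast?_eq_or_eq_of_mem_shuffles {u v w : List α} (h : w ∈ shuffles u v) :
    w.getLast? = u.getLast? ∨ w.getLast? = v.getLast? := by
  induction u, v using shuffles.induct generalizing w with
  | case1 v => simp_all
  | case2 u => simp_all
  | case3 a u b v ih₁ ih₂ =>
    simp only [shuffles_cons_cons, mem_append, mem_map] at h
    rcases h with ⟨w, hw, rfl⟩ | ⟨w, hw, rfl⟩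
    · rcases ih₁ hw with h | h <;> simp [getLast?_cons, h]
    · rcases ih₂ hw with h | h <;> simp [getLast?_cons, h]

theorem exists_shuffles_perm_append_cons (p : α → Bool) {u v : List α} {z : α}
    (hu : u.getLast? = some z) (hz : ¬p z) (hv : ∀ x ∈ v, p x) :
    ∃ L, shuffles u v ~ (u ++ v) :: L ∧ ∀ w ∈ L, (w.rtakeWhile p).length < v.length := by
  induction u, v using shuffles.induct with
  | case1 v => simp at hu
  | case2 u => exact ⟨[], by simp, by simp⟩
  | case3 a u b v ih₁ ih₂ =>
    have hz_mem : ∀ {u' v' w}, z ∈ u' → w ∈ shuffles u' v' → z ∈ w := fun hz' hw =>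
      (perm_append_of_mem_shuffles hw).mem_iff.2 (mem_append_left _ hz')
    have htail : ∀ c w, z ∈ w → (c :: w).rtakeWhile p = w.rtakeWhile p := fun c _ hw =>
      rtakeWhile_cons_of_exists p c ⟨z, hw, hz⟩
    obtain ⟨L₂, hL₂, hlt₂⟩ := ih₂ hu fun x hx => hv x (mem_cons_of_mem _ hx)
    have hlt : ∀ w ∈ shuffles (a :: u) v, ((b :: w).rtakeWhile p).length < (b :: v).length := by
      intro w hw
      rw [htail b w (hz_mem (mem_of_getLast? hu) hw), length_cons, Nat.lt_succ_iff]
      rcases mem_cons.1 (hL₂.mem_iff.1 hw) with rfl | hw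
      · rw [rtakeWhile_append_of_forall p (by simpa [hu] using hz)
          fun x hx => hv x (mem_cons_of_mem _ hx)]
      · exact (hlt₂ w hw).le
    obtain _ | ⟨c, u⟩ := u
    · refine ⟨(shuffles [a] v).map (b :: ·), by simp [shuffles_cons_cons], ?_⟩
      simpa using hlt
    · rw [getLast?_cons_cons] at hu
      obtain ⟨L₁, hL₁, hlt₁⟩ := ih₁ hu hv
      refine ⟨L₁.map (a :: ·) ++ (shuffles (a :: c :: u) v).map (b :: ·), ?_, ?_⟩
      · rw [shuffles_cons_cons]
        exact (hL₁.map _).append_right _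
      · simp only [mem_append, mem_map]
        rintro _ (⟨w, hw, rfl⟩ | ⟨w, hw, rfl⟩)
        · rw [htail a w (hz_mem (mem_of_getLast? hu) (hL₁.mem_iff.2 (mem_cons_of_mem _ hw)))]
          exact hlt₁ w hw
        · exact hlt w hw

end List

abbrev IsAzm2Word (l : List Letter) : Prop := l = [] ∨ (l.head? ≠ some 0 ∧ l.getLast? = some 0)

abbrev IsWsubWord (l : List Letter) : Prop := (0 : Letter) ∉ l ∧ (l = [] ∨ l.getLast? = some 2)

abbrev IsAz0Word (l : List Letter) : Prop := l = [] ∨ (l.head? ≠ some 0 ∧ l.getLast? ≠ some 1)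

theorem linearIndependent_wordOf : LinearIndependent ℤ wordOf :=
  (MonoidAlgebra.basis (FreeMonoid Letter) ℤ).linearIndependent.comp _ FreeMonoid.ofList.injective

theorem range_wordOf_subtype (P : List Letter → Prop) :
    range (fun l : {l // P l} => wordOf l) = {x | ∃ l, P l ∧ x = wordOf l} := by
  ext x
  simp [eq_comm]

noncomputable def wordBasis (P : List Letter → Prop) {S : Submodule ℤ Az}
    (hS : S = span ℤ {x | ∃ l, P l ∧ x = wordOf l}) : Module.Basis {l // P l} ℤ S :=
  (Module.Basis.span (linearIndependent_wordOf.comp _ Subtype.val_injective)).map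
    (LinearEquiv.ofEq _ _ (by rw [hS, ← range_wordOf_subtype]; rfl))

@[simp] theorem coe_wordBasis (P : List Letter → Prop) {S : Submodule ℤ Az}
    (hS : S = span ℤ {x | ∃ l, P l ∧ x = wordOf l}) (l : {l // P l}) :
    (wordBasis P hS l : Az) = wordOf l := by
  simp [wordBasis, Module.Basis.span_apply]

theorem letter_eq_two {x : Letter} (h₀ : x ≠ 0) (h₁ : x ≠ 1) : x = 2 := by
  revert x; decide

theorem isAz0Word_append_iff {u v : List Letter} (hu : u = [] ∨ u.getLast? = some 0)
    (hv : (0 : Letter) ∉ v) : IsAz0Word (u ++ v) ↔ IsAzm2Word u ∧ IsWsubWord v := by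
  constructor
  · intro h
    refine ⟨?_, hv, ?_⟩
    · rcases hu with rfl | hu
      · exact Or.inl rfl
      · cases u with
        | nil => simp at hu
        | cons c u => exact Or.inr ⟨by simpa using (h.resolve_left (by simp)).1, hu⟩
    · obtain rfl | ⟨v, y, rfl⟩ := List.eq_nil_or_concat v
      · exact Or.inl rfl
      · have hy₁ : y ≠ 1 := by simpa using (h.resolve_left (by simp)).2
        exact Or.inr (by simp [letter_eq_two (fun hy => hv (by simp [hy])) hy₁])
  · rintro ⟨rfl | ⟨hu₀, hu₁⟩, -, hv₂⟩
    · rcases hv₂ with rfl | hv₂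
      · exact Or.inl rfl
      · exact Or.inr ⟨fun h => hv (List.mem_of_mem_head? h), by simp [hv₂]⟩
    · cases u with
      | nil => simp at hu₁
      | cons c u =>
        refine Or.inr ⟨by simpa using hu₀, ?_⟩
        rw [List.getLast?_append]
        rcases hv₂ with rfl | hv₂ <;> simp [*]

theorem rtakeWhile_ne_zero_append {u v : List Letter} (hu : u = [] ∨ u.getLast? = some 0)
    (hv : (0 : Letter) ∉ v) : (u ++ v).rtakeWhile (· ≠ 0) = v :=
  List.rtakeWhile_append_of_forall _ (by rcases hu with rfl | hu <;> simp [*])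
    fun x hx => by simpa using ne_of_mem_of_not_mem hx hv

theorem rdropWhile_ne_zero_append {u v : List Letter} (hu : u = [] ∨ u.getLast? = some 0)
    (hv : (0 : Letter) ∉ v) : (u ++ v).rdropWhile (· ≠ 0) = u :=
  List.rdropWhile_append_of_forall _ (by rcases hu with rfl | hu <;> simp [*])
    fun x hx => by simpa using ne_of_mem_of_not_mem hx hv

theorem rdropWhile_ne_zero_eq_nil_or (l : List Letter) :
    l.rdropWhile (· ≠ 0) = [] ∨ (l.rdropWhile (· ≠ 0)).getLast? = some 0 := by
  by_cases hd : l.rdropWhile (· ≠ 0) = []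
  · exact Or.inl hd
  · right
    rw [List.getLast?_eq_some_getLast hd]
    simpa using List.rdropWhile_last_not (· ≠ (0 : Letter)) l hd

theorem zero_notMem_rtakeWhile_ne_zero (l : List Letter) : (0 : Letter) ∉ l.rtakeWhile (· ≠ 0) :=
  fun h => by simpa using List.mem_rtakeWhile_imp h

def appendEquiv : {l // IsAzm2Word l} × {l // IsWsubWord l} ≃ {l // IsAz0Word l} where
  toFun p := ⟨p.1 ++ p.2,
    (isAz0Word_append_iff (p.1.2.imp_right And.right) p.2.2.1).2 ⟨p.1.2, p.2.2⟩⟩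
  invFun w :=
    have h := (isAz0Word_append_iff (rdropWhile_ne_zero_eq_nil_or w.1)
      (zero_notMem_rtakeWhile_ne_zero w.1)).1 (by rw [List.rdropWhile_append_rtakeWhile]; exact w.2)
    (⟨_, h.1⟩, ⟨_, h.2⟩)
  left_inv := by
    rintro ⟨⟨u, hu⟩, ⟨v, hv⟩⟩
    ext : 2
    · exact rdropWhile_ne_zero_append (hu.imp_right And.right) hv.1
    · exact rtakeWhile_ne_zero_append (hu.imp_right And.right) hv.1
  right_inv w := Subtype.ext List.rdropWhile_append_rtakeWhile

theorem wordOf_cons (a : Letter) (w : List Letter) : wordOf (a :: w) = wordOf [a] * wordOf w := by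
  simp only [wordOf, MonoidAlgebra.single_mul_single, one_mul]
  rfl

theorem shuffleWord_eq_sum_shuffles (u v : List Letter) :
    shuffleWord u v = ((u.shuffles v).map wordOf).sum := by
  induction u, v using List.shuffles.induct with
  | case1 v => cases v <;> simp [shuffleWord]
  | case2 u => cases u <;> simp [shuffleWord]
  | case3 a u b v ih₁ ih₂ =>
    rw [shuffleWord, List.shuffles_cons_cons, ih₁, ih₂, List.map_append, List.sum_append,
      List.map_map, List.map_map, ← List.sum_map_mul_left, ← List.sum_map_mul_left]
    simp only [Function.comp_def, ← wordOf_cons]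

theorem sh_wordOf (u v : List Letter) : sh (wordOf u) (wordOf v) = shuffleWord u v := by
  simp [sh, wordOf]

theorem isAz0Word_iff {w : List Letter} :
    IsAz0Word w ↔ w.head? ≠ some 0 ∧ w.getLast? ≠ some 1 := by
  cases w <;> simp [IsAz0Word]

theorem isAz0Word_of_mem_shuffles {u v w : List Letter} (hu : IsAzm2Word u) (hv : IsWsubWord v)
    (hw : w ∈ u.shuffles v) : IsAz0Word w := by
  have hu' : u.head? ≠ some 0 ∧ u.getLast? ≠ some 1 := by
    rcases hu with rfl | ⟨hu₀, hu₁⟩ <;> simp [*]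
  have hv' : v.head? ≠ some 0 ∧ v.getLast? ≠ some 1 := by
    refine ⟨fun h => hv.1 (List.mem_of_mem_head? h), ?_⟩
    rcases hv.2 with rfl | hv₂ <;> simp [*]
  rw [isAz0Word_iff]
  constructor
  · rcases List.head?_eq_or_eq_of_mem_shuffles hw with h | h <;> rw [h]
    exacts [hu'.1, hv'.1]
  · rcases List.getLast?_eq_or_eq_of_mem_shuffles hw with h | h <;> rw [h]
    exacts [hu'.2, hv'.2]

theorem shuffleWord_sub_wordOf_append_mem_span {u v : List Letter} (hu : IsAzm2Word u)
    (hv : IsWsubWord v) :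
    shuffleWord u v - wordOf (u ++ v) ∈
      span ℤ (wordOf '' {w | IsAz0Word w ∧ (w.rtakeWhile (· ≠ 0)).length < v.length}) := by
  obtain rfl | hu₁ := hu.imp_right And.right
  · simp [shuffleWord_eq_sum_shuffles]
  obtain ⟨L, hL, hlt⟩ := List.exists_shuffles_perm_append_cons (· ≠ (0 : Letter)) hu₁ (by simp)
    fun x hx => by simpa using ne_of_mem_of_not_mem hx hv.1
  rw [shuffleWord_eq_sum_shuffles, (hL.map wordOf).sum_eq, List.map_cons, List.sum_cons,
    add_sub_cancel_left]
  refine list_sum_mem fun x hx => ?_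
  obtain ⟨w, hw, rfl⟩ := List.mem_map.1 hx
  exact subset_span ⟨w, ⟨isAz0Word_of_mem_shuffles hu hv
    (hL.mem_iff.2 (List.mem_cons_of_mem _ hw)), hlt w hw⟩, rfl⟩

theorem linearIndependent_wordOf_append :
    LinearIndependent ℤ fun p : {l // IsAzm2Word l} × {l // IsWsubWord l} =>
      wordOf (p.1.1 ++ p.2.1) :=
  (linearIndependent_wordOf.comp _ Subtype.val_injective).comp appendEquiv appendEquiv.injective

theorem span_range_wordOf_append :
    span ℤ (range fun p : {l // IsAzm2Word l} × {l // IsWsubWord l} =>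
      wordOf (p.1.1 ++ p.2.1)) = Az0 := by
  have h : (fun p : {l // IsAzm2Word l} × {l // IsWsubWord l} => wordOf (p.1.1 ++ p.2.1)) =
      (fun w : {l // IsAz0Word l} => wordOf w) ∘ appendEquiv := rfl
  rw [h, range_comp, appendEquiv.range_eq_univ, image_univ, range_wordOf_subtype]
  rfl

theorem shuffleWord_sub_mem_span_lt (p : {l // IsAzm2Word l} × {l // IsWsubWord l}) :
    shuffleWord p.1 p.2 - wordOf (p.1.1 ++ p.2.1) ∈
      span ℤ ((fun q : {l // IsAzm2Word l} × {l // IsWsubWord l} => wordOf (q.1.1 ++ q.2.1)) ''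
        {q | q.2.1.length < p.2.1.length}) := by
  refine span_mono ?_ (shuffleWord_sub_wordOf_append_mem_span p.1.2 p.2.2)
  rintro _ ⟨w, ⟨hw, hlt⟩, rfl⟩
  exact ⟨appendEquiv.symm ⟨w, hw⟩, hlt,
    congrArg (wordOf ∘ Subtype.val) (appendEquiv.apply_symm_apply ⟨w, hw⟩)⟩

theorem linearIndependent_shuffleWord :
    LinearIndependent ℤ fun p : {l // IsAzm2Word l} × {l // IsWsubWord l} =>
      shuffleWord p.1 p.2 :=
  linearIndependent_of_sub_mem_span_lt linearIndependent_wordOf_append shuffleWord_sub_mem_span_lt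

theorem span_range_shuffleWord :
    span ℤ (range fun p : {l // IsAzm2Word l} × {l // IsWsubWord l} =>
      shuffleWord p.1 p.2) = Az0 := by
  rw [span_range_eq_of_sub_mem_span_lt shuffleWord_sub_mem_span_lt, span_range_wordOf_append]

/-- The shuffle map `𝒜_z^{-2} ⊗ (𝒜_z^0 ∩ ℤ⟨e₁,e_z⟩) → 𝒜_z^0`, `u ⊗ v ↦ u ⧢ v`,
is a bijection onto `𝒜_z^0`. -/
theorem stmt_10 :
    Function.Injective
      (TensorProduct.lift ((sh.comp Azm2.subtype).compl₂ Wsub.subtype)) ∧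
    LinearMap.range
      (TensorProduct.lift ((sh.comp Azm2.subtype).compl₂ Wsub.subtype)) = Az0 := by
  let b :=
    (wordBasis IsAzm2Word Azm2.eq_def).tensorProduct (wordBasis IsWsubWord Wsub.eq_def)
  have hlift : TensorProduct.lift ((sh.comp Azm2.subtype).compl₂ Wsub.subtype) =
      b.constr ℤ fun p => shuffleWord p.1 p.2 :=
    (b.constr_eq ℤ fun p => by simp [b, Module.Basis.tensorProduct_apply', sh_wordOf]).symm
  rw [hlift, b.constr_range, span_range_shuffleWord]
  exact ⟨b.injective_constr_of_linearIndependent linearIndependent_shuffleWord, rfl⟩
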